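/- Let κ be a kernel with ‖κ‖₂ < ∞ and φ : X → [0,∞) a measurable function with φ ∈ L²(μ). Define iterates 𝒦⁰φ = φ and (𝒦ⁿφ)(x) = ∫_X κ(x,u) (𝒦ⁿ⁻¹φ)(u) dμ(u) (Lebesgue integrals of nonnegative functions, valued in [0,∞]). Then for every n ≥ 1 and every x ∈ X such that the function f_x := κ(x,·) lies in L²(μ), one has (𝒦ⁿφ)(x) ≤ ρ(κ)^{n−1} · ‖f_x‖_{L²(μ)} · ‖φ‖_{L²(μ)}. (Paper's contraction lemma for iterated kernels, Lemma 6.17 / theo:bp-contraction.) -/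

import Mathlib

open MeasureTheory ENNReal

/-- The integral operator associated with a kernel `κ`. -/
noncomputable def kernelOp {X : Type*} [MeasurableSpace X] (μ : Measure X)
    (κ : X → X → ℝ) (f : X → ℝ) : X → ℝ :=
  fun x => ∫ y, κ x y * f y ∂μ

/-- The operator norm `ρ(κ)` of the integral operator on `L²(μ)`. -/
noncomputable def opNorm {X : Type*} [MeasurableSpace X] (μ : Measure X)
    (κ : X → X → ℝ) : ℝ :=
  sSup {r : ℝ | ∃ f : X → ℝ, MemLp f 2 μ ∧ eLpNorm f 2 μ = 1 ∧
    r = (eLpNorm (kernelOp μ κ f) 2 μ).toReal}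

/-- Pointwise iterates of the kernel operator, as Lebesgue integrals of
nonnegative functions valued in `[0,∞]`: `𝒦⁰φ = φ`,
`(𝒦ⁿφ)(x) = ∫ κ(x,u) (𝒦ⁿ⁻¹φ)(u) dμ(u)`. -/
noncomputable def kIter {X : Type*} [MeasurableSpace X] (μ : Measure X)
    (κ : X → X → ℝ) (φ : X → ℝ) : ℕ → X → ℝ≥0∞
  | 0 => fun x => ENNReal.ofReal (φ x)
  | n + 1 => fun x => ∫⁻ u, ENNReal.ofReal (κ x u) * kIter μ κ φ n u ∂μ

/-!
Almost every row `κ(x,·)` of a Hilbert–Schmidt kernel lies in `L²(μ)`, so for a.e. `x` the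
Lebesgue integrals defining `kIter` are finite Bochner integrals, and `kIter n` agrees a.e. with
`ofReal` of the real iterate `𝒦ⁿφ`. The Hilbert–Schmidt bound `‖𝒦f‖₂ ≤ ‖κ‖₂ ‖f‖₂` makes `ρ(κ)` an
honest supremum, whence `‖𝒦ᵐφ‖₂ ≤ ρ(κ)ᵐ ‖φ‖₂`; Cauchy–Schwarz at the given `x` then gives
`(𝒦ᵐ⁺¹φ)(x) = ∫ κ(x,u) (𝒦ᵐφ)(u) dμ(u) ≤ ‖f_x‖₂ ‖𝒦ᵐφ‖₂`.
-/

section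

variable {X : Type*} [MeasurableSpace X] {μ : Measure X} {κ : X → X → ℝ} {f : X → ℝ}

lemma lintegral_enorm_mul_le_eLpNorm_two_mul {g : X → ℝ} (hf : AEStronglyMeasurable f μ)
    (hg : AEStronglyMeasurable g μ) :
    ∫⁻ x, ‖f x‖ₑ * ‖g x‖ₑ ∂μ ≤ eLpNorm f 2 μ * eLpNorm g 2 μ := by
  simpa [eLpNorm_one_eq_lintegral_enorm, enorm_mul] using
    eLpNorm_smul_le_mul_eLpNorm (p := 2) (q := 2) (r := 1) hg hf

lemma eLpNorm_two_sq : eLpNorm f 2 μ ^ 2 = ∫⁻ x, ‖f x‖ₑ ^ 2 ∂μ := by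
  simpa using eLpNorm_nnreal_pow_eq_lintegral (μ := μ) (f := f) (p := 2) two_ne_zero

lemma enorm_kernelOp_le (hκ : Measurable (fun p : X × X => κ p.1 p.2))
    (hf : AEStronglyMeasurable f μ) (x : X) :
    ‖kernelOp μ κ f x‖ₑ ≤ eLpNorm (κ x) 2 μ * eLpNorm f 2 μ :=
  calc ‖kernelOp μ κ f x‖ₑ ≤ ∫⁻ y, ‖κ x y * f y‖ₑ ∂μ := enorm_integral_le_lintegral_enorm _
    _ = ∫⁻ y, ‖κ x y‖ₑ * ‖f y‖ₑ ∂μ := by simp only [enorm_mul]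
    _ ≤ _ := lintegral_enorm_mul_le_eLpNorm_two_mul
        (hκ.comp measurable_prodMk_left).aestronglyMeasurable hf

lemma lintegral_eLpNorm_two_sq_eq [SFinite μ] (hκ : Measurable (fun p : X × X => κ p.1 p.2)) :
    ∫⁻ x, eLpNorm (κ x) 2 μ ^ 2 ∂μ = eLpNorm (fun p : X × X => κ p.1 p.2) 2 (μ.prod μ) ^ 2 := by
  simp only [eLpNorm_two_sq]
  exact (lintegral_prod _ (hκ.enorm.pow_const 2).aemeasurable).symm

lemma eLpNorm_kernelOp_le [SFinite μ] (hκ : Measurable (fun p : X × X => κ p.1 p.2))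
    (hf : AEStronglyMeasurable f μ) :
    eLpNorm (kernelOp μ κ f) 2 μ ≤
      eLpNorm (fun p : X × X => κ p.1 p.2) 2 (μ.prod μ) * eLpNorm f 2 μ := by
  have hrow : Measurable fun x => eLpNorm (κ x) 2 μ ^ 2 := by
    simp only [eLpNorm_two_sq]
    exact (hκ.enorm.pow_const 2).lintegral_prod_right'
  rw [← ENNReal.pow_le_pow_left_iff two_ne_zero, mul_pow, ← lintegral_eLpNorm_two_sq_eq hκ,
    ← lintegral_mul_const _ hrow, eLpNorm_two_sq]
  gcongr with x
  rw [← mul_pow]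
  gcongr
  exact enorm_kernelOp_le hκ hf x

lemma memLp_kernelOp [SFinite μ] (hκ : Measurable (fun p : X × X => κ p.1 p.2))
    (hκ_HS : MemLp (fun p : X × X => κ p.1 p.2) 2 (μ.prod μ)) (hf : MemLp f 2 μ) :
    MemLp (kernelOp μ κ f) 2 μ :=
  ⟨(hκ.aestronglyMeasurable.mul hf.1.comp_snd).integral_prod_right',
    (eLpNorm_kernelOp_le hκ hf.1).trans_lt (ENNReal.mul_lt_top hκ_HS.2 hf.2)⟩

lemma opNorm_nonneg : 0 ≤ opNorm μ κ :=
  Real.sSup_nonneg (by rintro r ⟨f, -, -, rfl⟩; exact ENNReal.toReal_nonneg)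

lemma toReal_eLpNorm_kernelOp_le_opNorm [SFinite μ]
    (hκ : Measurable (fun p : X × X => κ p.1 p.2))
    (hκ_HS : MemLp (fun p : X × X => κ p.1 p.2) 2 (μ.prod μ))
    (hf : MemLp f 2 μ) (hf_one : eLpNorm f 2 μ = 1) :
    (eLpNorm (kernelOp μ κ f) 2 μ).toReal ≤ opNorm μ κ := by
  -- `sSup` of a set not bounded above is `0`; the Hilbert–Schmidt bound rules this out.
  refine le_csSup ⟨(eLpNorm (fun p : X × X => κ p.1 p.2) 2 (μ.prod μ)).toReal, ?_⟩
    ⟨f, hf, hf_one, rfl⟩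
  rintro r ⟨g, hg, hg_one, rfl⟩
  refine ENNReal.toReal_mono hκ_HS.2.ne ?_
  simpa [hg_one] using eLpNorm_kernelOp_le hκ hg.1

lemma kernelOp_const_smul (c : ℝ) :
    kernelOp μ κ (c • f) = c • kernelOp μ κ f := by
  ext x
  simp only [kernelOp, Pi.smul_apply, smul_eq_mul, ← integral_const_mul]
  congr 1 with y
  ring

lemma kernelOp_eq_zero_of_eLpNorm_eq_zero (hf : AEStronglyMeasurable f μ)
    (h : eLpNorm f 2 μ = 0) : kernelOp μ κ f = 0 := by
  ext x
  refine integral_eq_zero_of_ae ?_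
  filter_upwards [(eLpNorm_eq_zero_iff hf two_ne_zero).1 h] with y hy
  simp [hy]

lemma eLpNorm_kernelOp_le_opNorm_mul [SFinite μ]
    (hκ : Measurable (fun p : X × X => κ p.1 p.2))
    (hκ_HS : MemLp (fun p : X × X => κ p.1 p.2) 2 (μ.prod μ)) (hf : MemLp f 2 μ) :
    eLpNorm (kernelOp μ κ f) 2 μ ≤ ENNReal.ofReal (opNorm μ κ) * eLpNorm f 2 μ := by
  rcases eq_or_ne (eLpNorm f 2 μ) 0 with h0 | h0
  · simp [kernelOp_eq_zero_of_eLpNorm_eq_zero hf.1 h0]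
  set c := (eLpNorm f 2 μ).toReal
  have hc : 0 < c := ENNReal.toReal_pos h0 hf.2.ne
  have hf_eq : f = c • (c⁻¹ • f) := by rw [smul_smul, mul_inv_cancel₀ hc.ne', one_smul]
  have hunit : eLpNorm (c⁻¹ • f) 2 μ = 1 := by
    rw [eLpNorm_const_smul, Real.enorm_of_nonneg (inv_nonneg.2 hc.le),
      ENNReal.ofReal_inv_of_pos hc, ENNReal.ofReal_toReal hf.2.ne,
      ENNReal.inv_mul_cancel h0 hf.2.ne]
  have hunit_le := toReal_eLpNorm_kernelOp_le_opNorm hκ hκ_HS (hf.const_smul c⁻¹) hunit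
  rw [hf_eq, kernelOp_const_smul, eLpNorm_const_smul, eLpNorm_const_smul, hunit, mul_one,
    mul_comm, Real.enorm_of_nonneg hc.le,
    ← ENNReal.ofReal_toReal (memLp_kernelOp hκ hκ_HS (hf.const_smul c⁻¹)).2.ne]
  gcongr

lemma kernelOp_nonneg (hκ_nonneg : ∀ x y, 0 ≤ κ x y) (hf_nonneg : ∀ x, 0 ≤ f x) (x : X) :
    0 ≤ kernelOp μ κ f x :=
  integral_nonneg fun y => mul_nonneg (hκ_nonneg x y) (hf_nonneg y)

lemma iterate_kernelOp_nonneg (hκ_nonneg : ∀ x y, 0 ≤ κ x y) (hf_nonneg : ∀ x, 0 ≤ f x)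
    (n : ℕ) (x : X) : 0 ≤ (kernelOp μ κ)^[n] f x := by
  induction n generalizing x with
  | zero => exact hf_nonneg x
  | succ n ih => rw [Function.iterate_succ_apply']; exact kernelOp_nonneg hκ_nonneg ih x

lemma memLp_iterate_kernelOp [SFinite μ] (hκ : Measurable (fun p : X × X => κ p.1 p.2))
    (hκ_HS : MemLp (fun p : X × X => κ p.1 p.2) 2 (μ.prod μ)) (hf : MemLp f 2 μ) (n : ℕ) :
    MemLp ((kernelOp μ κ)^[n] f) 2 μ := by
  induction n with
  | zero => exact hf
  | succ n ih => rw [Function.iterate_succ_apply']; exact memLp_kernelOp hκ hκ_HS ih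

lemma eLpNorm_iterate_kernelOp_le [SFinite μ] (hκ : Measurable (fun p : X × X => κ p.1 p.2))
    (hκ_HS : MemLp (fun p : X × X => κ p.1 p.2) 2 (μ.prod μ)) (hf : MemLp f 2 μ) (n : ℕ) :
    eLpNorm ((kernelOp μ κ)^[n] f) 2 μ ≤ ENNReal.ofReal (opNorm μ κ ^ n) * eLpNorm f 2 μ := by
  induction n with
  | zero => simp
  | succ n ih =>
    rw [Function.iterate_succ_apply', pow_succ', ENNReal.ofReal_mul opNorm_nonneg, mul_assoc]
    exact (eLpNorm_kernelOp_le_opNorm_mul hκ hκ_HS (memLp_iterate_kernelOp hκ hκ_HS hf n)).trans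
      (by gcongr)

lemma lintegral_ofReal_mul_eq_ofReal_kernelOp (hκ_nonneg : ∀ x y, 0 ≤ κ x y)
    (hf : MemLp f 2 μ) (hf_nonneg : ∀ x, 0 ≤ f x) {x : X} (hx : MemLp (κ x) 2 μ) :
    ∫⁻ y, ENNReal.ofReal (κ x y) * ENNReal.ofReal (f y) ∂μ =
      ENNReal.ofReal (kernelOp μ κ f x) := by
  simp only [← ENNReal.ofReal_mul (hκ_nonneg x _)]
  exact (ofReal_integral_eq_lintegral_ofReal (memLp_one_iff_integrable.1 (hf.mul' hx))
    (.of_forall fun y => mul_nonneg (hκ_nonneg x y) (hf_nonneg y))).symm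

lemma ae_memLp_two_row [SFinite μ] (hκ : Measurable (fun p : X × X => κ p.1 p.2))
    (hκ_HS : MemLp (fun p : X × X => κ p.1 p.2) 2 (μ.prod μ)) :
    ∀ᵐ x ∂μ, MemLp (κ x) 2 μ := by
  filter_upwards [(hκ_HS.integrable_sq).prod_right_ae] with x hx
  exact (memLp_two_iff_integrable_sq (hκ.comp measurable_prodMk_left).aestronglyMeasurable).2 hx

lemma kIter_ae_eq_ofReal_iterate_kernelOp [SFinite μ]
    (hκ : Measurable (fun p : X × X => κ p.1 p.2))
    (hκ_nonneg : ∀ x y, 0 ≤ κ x y) (hκ_HS : MemLp (fun p : X × X => κ p.1 p.2) 2 (μ.prod μ))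
    (hf_nonneg : ∀ x, 0 ≤ f x) (hf : MemLp f 2 μ) (n : ℕ) :
    kIter μ κ f n =ᵐ[μ] fun x => ENNReal.ofReal ((kernelOp μ κ)^[n] f x) := by
  induction n with
  | zero => rfl
  | succ n ih =>
    filter_upwards [ae_memLp_two_row hκ hκ_HS] with x hx
    rw [Function.iterate_succ_apply', ← lintegral_ofReal_mul_eq_ofReal_kernelOp hκ_nonneg
      (memLp_iterate_kernelOp hκ hκ_HS hf n) (iterate_kernelOp_nonneg hκ_nonneg hf_nonneg n) hx]
    exact lintegral_congr_ae (ih.mono fun y hy => congrArg (ENNReal.ofReal (κ x y) * ·) hy)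

lemma kIter_succ_le [SFinite μ] (hκ : Measurable (fun p : X × X => κ p.1 p.2))
    (hκ_nonneg : ∀ x y, 0 ≤ κ x y) (hκ_HS : MemLp (fun p : X × X => κ p.1 p.2) 2 (μ.prod μ))
    (hf_nonneg : ∀ x, 0 ≤ f x) (hf : MemLp f 2 μ) (n : ℕ) (x : X) :
    kIter μ κ f (n + 1) x ≤ eLpNorm (κ x) 2 μ * eLpNorm ((kernelOp μ κ)^[n] f) 2 μ :=
  calc kIter μ κ f (n + 1) x
      = ∫⁻ y, ‖κ x y‖ₑ * ‖(kernelOp μ κ)^[n] f y‖ₑ ∂μ := by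
        refine lintegral_congr_ae ?_
        filter_upwards [kIter_ae_eq_ofReal_iterate_kernelOp hκ hκ_nonneg hκ_HS hf_nonneg hf n]
          with y hy
        rw [hy, Real.enorm_of_nonneg (hκ_nonneg x y),
          Real.enorm_of_nonneg (iterate_kernelOp_nonneg hκ_nonneg hf_nonneg n y)]
    _ ≤ _ := lintegral_enorm_mul_le_eLpNorm_two_mul
        (hκ.comp measurable_prodMk_left).aestronglyMeasurable
        (memLp_iterate_kernelOp hκ hκ_HS hf n).1

end

theorem kIter_le_opNorm_pow_general
    {X : Type*} [MeasurableSpace X] (μ : Measure X) [IsFiniteMeasure μ]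
    (κ : X → X → ℝ) (φ : X → ℝ)
    (hκ_meas : Measurable (fun p : X × X => κ p.1 p.2))
    (hκ_nonneg : ∀ x y, 0 ≤ κ x y)
    (hκ_HS : MemLp (fun p : X × X => κ p.1 p.2) 2 (μ.prod μ))
    (hφ_nonneg : ∀ x, 0 ≤ φ x)
    (hφ_L2 : MemLp φ 2 μ) :
    ∀ n : ℕ, 1 ≤ n → ∀ x : X, MemLp (fun y => κ x y) 2 μ →
      kIter μ κ φ n x ≤ ENNReal.ofReal
        (opNorm μ κ ^ (n - 1) * (eLpNorm (fun y => κ x y) 2 μ).toReal *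
          (eLpNorm φ 2 μ).toReal) := by
  intro n hn x hx
  obtain ⟨n, rfl⟩ := Nat.exists_eq_add_of_le' hn
  calc kIter μ κ φ (n + 1) x
      ≤ eLpNorm (κ x) 2 μ * eLpNorm ((kernelOp μ κ)^[n] φ) 2 μ :=
        kIter_succ_le hκ_meas hκ_nonneg hκ_HS hφ_nonneg hφ_L2 n x
    _ ≤ eLpNorm (κ x) 2 μ * (ENNReal.ofReal (opNorm μ κ ^ n) * eLpNorm φ 2 μ) := by
        gcongr; exact eLpNorm_iterate_kernelOp_le hκ_meas hκ_HS hφ_L2 n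
    _ = _ := by
        rw [Nat.add_sub_cancel, ENNReal.ofReal_mul (mul_nonneg (pow_nonneg opNorm_nonneg n)
          toReal_nonneg), ENNReal.ofReal_mul (pow_nonneg opNorm_nonneg n),
          ENNReal.ofReal_toReal hx.2.ne, ENNReal.ofReal_toReal hφ_L2.2.ne]
        ring

/-- Contraction estimate for iterated kernels: for `n ≥ 1` and any `x` with
`f_x = κ(x,·) ∈ L²(μ)`, one has `(𝒦ⁿφ)(x) ≤ ρ(κ)^{n−1} ‖f_x‖₂ ‖φ‖₂`. -/
theorem kIter_le_opNorm_pow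
    {X : Type*} [MeasurableSpace X] (μ : Measure X) [IsFiniteMeasure μ]
    (κ : X → X → ℝ) (φ : X → ℝ)
    (hκ_meas : Measurable (fun p : X × X => κ p.1 p.2))
    (hκ_nonneg : ∀ x y, 0 ≤ κ x y)
    (hκ_HS : MemLp (fun p : X × X => κ p.1 p.2) 2 (μ.prod μ))
    (hφ_meas : Measurable φ)
    (hφ_nonneg : ∀ x, 0 ≤ φ x)
    (hφ_L2 : MemLp φ 2 μ) :
    ∀ n : ℕ, 1 ≤ n → ∀ x : X, MemLp (fun y => κ x y) 2 μ →
      kIter μ κ φ n x ≤ ENNReal.ofReal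
        (opNorm μ κ ^ (n - 1) * (eLpNorm (fun y => κ x y) 2 μ).toReal *
          (eLpNorm φ 2 μ).toReal) :=
  kIter_le_opNorm_pow_general μ κ φ hκ_meas hκ_nonneg hκ_HS hφ_nonneg hφ_L2
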